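/- Every CL-polynomial has a palindromic h*-polynomial. That is, if f(z) = b(z)·∏_{i=0}^{m}(z^2 + z + c_i) with all c_i ≥ 1/4 real, where b(z) = a if deg f = d is even and b(z) = a(2z+1) if d is odd (a a nonzero constant), then writing ∑_{k≥0} f(k)t^k = h*(t)/(1-t)^{d+1}, the coefficients of h* satisfy h*_i = h*_{d-i} for all 0 ≤ i ≤ d. -/

import Mathlib

/-!
The substitution `z ↦ -1 - z` fixes every `z² + z + c` and negates `2z + 1`, so a CL-polynomial
of degree `d` satisfies `f(-1 - z) = (-1)ᵈ f(z)`. Now `h*ₙ = ∑_{j ≤ n} (-1)ʲ C(d+1, j) f(n - j)`,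
and the full `(d+1)`-st difference `∑_{j ≤ d+1} (-1)ʲ C(d+1, j) f(i - j)` vanishes because
`deg f = d`. Hence `h*ᵢ` is minus the part `j > i` of that sum, whose arguments `i - j` are
`-1 - l` for `0 ≤ l ≤ d - i`; the symmetry turns it into `h*_{d-i}`.
-/

open Polynomial Finset fwdDiff
open scoped PowerSeries

namespace PowerSeries

variable {R : Type*} [CommRing R]

lemma coeff_one_sub_X_pow (n j : ℕ) :
    coeff j ((1 - X : R⟦X⟧) ^ n) = (-1) ^ j * n.choose j := by
  have : (1 - X : R⟦X⟧) ^ n = rescale (-1) (((1 + Polynomial.X) ^ n : R[X]) : R⟦X⟧) := by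
    simp [Polynomial.coe_pow, map_pow, rescale_X, sub_eq_add_neg]
  rw [this, coeff_rescale, Polynomial.coeff_coe, coeff_one_add_X_pow]

end PowerSeries

namespace Polynomial

variable {R : Type*} [CommRing R]

lemma sum_neg_one_pow_mul_choose_mul_eval_sub_eq_zero (p : R[X]) {n : ℕ} (hn : p.natDegree < n)
    (y : R) : ∑ j ∈ range (n + 1), (-1) ^ j * (n.choose j : R) * p.eval (y - j) = 0 := by
  have hdiff := congr_fun (fwdDiff_iter_eq_zero_of_degree_lt hn) (y - n)
  rw [fwdDiff_iter_eq_sum_shift, ← sum_range_reflect, Pi.zero_apply] at hdiff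
  rw [← hdiff]
  refine sum_congr rfl fun j hj => ?_
  have hjn : j ≤ n := Nat.lt_succ_iff.mp (mem_range.mp hj)
  rw [add_tsub_cancel_right, Nat.sub_sub_self hjn, Nat.choose_symm hjn, zsmul_eq_mul, nsmul_eq_mul,
    Nat.cast_sub hjn]
  push_cast
  ring_nf

/-- The power series `∑ p(k) tᵏ · (1 - t)^(d+1)`; when `d = natDegree p` it is the
`h*`-polynomial of `p`. -/
noncomputable def hStar (p : R[X]) (d : ℕ) : R⟦X⟧ :=
  PowerSeries.mk (fun k : ℕ => p.eval (k : R)) * (1 - PowerSeries.X : R⟦X⟧) ^ (d + 1)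

lemma coeff_hStar (p : R[X]) (d n : ℕ) :
    PowerSeries.coeff n (p.hStar d) =
      ∑ j ∈ range (n + 1), (-1) ^ j * ((d + 1).choose j : R) * p.eval ((n : R) - j) := by
  rw [hStar, mul_comm, PowerSeries.coeff_mul, Nat.sum_antidiagonal_eq_sum_range_succ_mk]
  refine sum_congr rfl fun j hj => ?_
  rw [PowerSeries.coeff_one_sub_X_pow, PowerSeries.coeff_mk,
    Nat.cast_sub (Nat.lt_succ_iff.mp (mem_range.mp hj))]

lemma coeff_hStar_eq_coeff_hStar_sub {p : R[X]} {d : ℕ} (hp : p.natDegree ≤ d)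
    (hsym : ∀ x, p.eval (-1 - x) = (-1) ^ d * p.eval x) {i : ℕ} (hi : i ≤ d) :
    PowerSeries.coeff i (p.hStar d) = PowerSeries.coeff (d - i) (p.hStar d) := by
  have hvanish := p.sum_neg_one_pow_mul_choose_mul_eval_sub_eq_zero (Nat.lt_succ_of_le hp) i
  rw [show d + 1 + 1 = (i + 1) + (d - i + 1) by omega, sum_range_add, ← coeff_hStar] at hvanish
  have htail : ∀ l ∈ range (d - i + 1),
      (-1) ^ (i + 1 + l) * ((d + 1).choose (i + 1 + l) : R) * p.eval ((i : R) - (i + 1 + l : ℕ)) =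
        -((-1) ^ (d - i - l) * ((d + 1).choose (d - i - l) : R) * p.eval (l : R)) := by
    intro l hl
    obtain ⟨k, rfl⟩ : ∃ k, d = i + l + k := ⟨d - i - l, by have := mem_range.mp hl; omega⟩
    rw [show i + l + k - i - l = k by omega, show i + l + k + 1 = (i + 1 + l) + k by ring,
      Nat.choose_symm_add, show (i : R) - (i + 1 + l : ℕ) = -1 - l by push_cast; ring, hsym]
    ring_nf
    simp only [pow_mul', neg_one_sq, one_pow, mul_one]
  rw [sum_congr rfl htail, sum_neg_distrib, ← sum_range_reflect, add_neg_eq_zero] at hvanish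
  rw [hvanish, coeff_hStar]
  refine sum_congr rfl fun j hj => ?_
  have hj : j ≤ d - i := Nat.lt_succ_iff.mp (mem_range.mp hj)
  rw [add_tsub_cancel_right, Nat.sub_sub_self hj, Nat.cast_sub hj]

lemma eval_neg_one_sub_prod_X_sq_add_X_add_C {ι : Type*} (s : Finset ι) (c : ι → R) (x : R) :
    (∏ i ∈ s, (X ^ 2 + X + C (c i))).eval (-1 - x) = (∏ i ∈ s, (X ^ 2 + X + C (c i))).eval x := by
  simp only [eval_prod, eval_add, eval_pow, eval_X, eval_C]
  exact prod_congr rfl fun i _ => by ring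

lemma eval_neg_one_sub_of_eq_mul_prod {ι : Type*} {s : Finset ι} {c : ι → R} {a : R} {b f : R[X]}
    (hb : (Even f.natDegree → b = C a) ∧ (¬ Even f.natDegree → b = C a * (2 * X + 1)))
    (hf : f = b * ∏ i ∈ s, (X ^ 2 + X + C (c i))) (x : R) :
    f.eval (-1 - x) = (-1) ^ f.natDegree * f.eval x := by
  generalize f.natDegree = n at hb ⊢
  have hbsym : b.eval (-1 - x) = (-1) ^ n * b.eval x := by
    by_cases hev : Even n
    · simp [hb.1 hev, hev.neg_one_pow]
    · simp only [hb.2 hev, (Nat.not_even_iff_odd.mp hev).neg_one_pow, eval_mul, eval_add,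
        eval_ofNat, eval_X, eval_C, eval_one]
      ring
  rw [hf, eval_mul, eval_mul, hbsym, eval_neg_one_sub_prod_X_sq_add_X_add_C, mul_assoc]

end Polynomial

theorem stmt3_general (a : ℝ) (m : ℕ) (c : ℕ → ℝ)
    (b f : Polynomial ℝ)
    (hb : (Even f.natDegree → b = C a) ∧ (¬ Even f.natDegree → b = C a * (2 * X + 1)))
    (hf : f = b * ∏ i ∈ Finset.range (m + 1), (X ^ 2 + X + C (c i)))
    (d : ℕ) (hd : d = f.natDegree)
    (h : Polynomial ℝ)
    (hser : PowerSeries.mk (fun k : ℕ => f.eval (k : ℝ)) * (1 - PowerSeries.X) ^ (d + 1)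
      = (h : PowerSeries ℝ)) :
    ∀ i ≤ d, h.coeff i = h.coeff (d - i) := by
  intro i hi
  have hsym : ∀ x, f.eval (-1 - x) = (-1) ^ d * f.eval x :=
    hd ▸ eval_neg_one_sub_of_eq_mul_prod hb hf
  have hpal := coeff_hStar_eq_coeff_hStar_sub hd.ge hsym hi
  rwa [show f.hStar d = h from hser, coeff_coe, coeff_coe] at hpal

/-- Every CL-polynomial has a palindromic h*-polynomial: if
`f = b ⬝ ∏ (X²+X+cᵢ)` with all `cᵢ ≥ 1/4` real and `b = C a` (if `deg f` even) or
`b = C a (2X+1)` (if `deg f` odd), `a ≠ 0`, and `∑ f(k)tᵏ = h(t)/(1-t)^{d+1}` with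
`d = deg f`, then `h` satisfies `hᵢ = h_{d-i}` for all `0 ≤ i ≤ d`. -/
theorem stmt3 (a : ℝ) (ha : a ≠ 0) (m : ℕ) (c : ℕ → ℝ) (hc : ∀ i ≤ m, (1 : ℝ)/4 ≤ c i)
    (b f : Polynomial ℝ)
    (hb : (Even f.natDegree → b = C a) ∧ (¬ Even f.natDegree → b = C a * (2 * X + 1)))
    (hf : f = b * ∏ i ∈ Finset.range (m + 1), (X ^ 2 + X + C (c i)))
    (d : ℕ) (hd : d = f.natDegree)
    (h : Polynomial ℝ)
    (hser : PowerSeries.mk (fun k : ℕ => f.eval (k : ℝ)) * (1 - PowerSeries.X) ^ (d + 1)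
      = (h : PowerSeries ℝ)) :
    ∀ i ≤ d, h.coeff i = h.coeff (d - i) :=
  stmt3_general a m c b f hb hf d hd h hser
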